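/- Suppose at time k the sequences (x̄_{k+i|k}*)_{i=0}^{N} and (ū_{k+i|k}*)_{i=0}^{N-1} satisfy the nominal dynamics x̄_{k+i+1|k} = A x̄_{k+i|k} + B ū_{k+i|k}, the tightened constraints F x̄_{k+i|k} + G ū_{k+i|k} ≤ f − t_{k+i|k} where t_{k+i+1|k+1} ≤ t_{k+i+1|k} componentwise for all i, and x̄_{k+N|k}* ∈ X_f with (A+BK)X_f ⊆ X_f and (F+GK)x ≤ f − t for all x ∈ X_f and all relevant tightenings t. Then the shifted sequence (x̄_{k+1|k}*, …, x̄_{k+N|k}*, (A+BK)x̄_{k+N|k}*) with inputs (ū_{k+1|k}*, …, ū_{k+N-1|k}*, K x̄_{k+N|k}*) is feasible for the problem at time k+1. -/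
import Mathlib


open Matrix

theorem stmt_15 (n m d N : ℕ) (hN : 1 ≤ N)
    (A : Matrix (Fin n) (Fin n) ℝ) (B : Matrix (Fin n) (Fin m) ℝ)
    (F : Matrix (Fin d) (Fin n) ℝ) (G : Matrix (Fin d) (Fin m) ℝ)
    (K : Matrix (Fin m) (Fin n) ℝ) (f : Fin d → ℝ)
    (xbar : ℕ → (Fin n → ℝ)) (ubar : ℕ → (Fin m → ℝ))
    -- constraint tightenings at time k (t) and at time k+1 (t')
    (t t' : ℕ → (Fin d → ℝ))
    (hdyn : ∀ i < N, xbar (i + 1) = A.mulVec (xbar i) + B.mulVec (ubar i))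
    (hcon : ∀ i < N, F.mulVec (xbar i) + G.mulVec (ubar i) ≤ f - t i)
    (hmono : ∀ i, t' i ≤ t (i + 1))
    (Xf : Set (Fin n → ℝ)) (hXf : xbar N ∈ Xf)
    (hinv : ∀ x ∈ Xf, (A + B * K).mulVec x ∈ Xf)
    (hterm : ∀ x ∈ Xf, ∀ i, (F + G * K).mulVec x ≤ f - t' i) :
    -- the shifted candidate sequences
    let ybar : ℕ → (Fin n → ℝ) :=
      fun i => if i < N then xbar (i + 1) else (A + B * K).mulVec (xbar N)
    let vbar : ℕ → (Fin m → ℝ) :=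
      fun i => if i < N - 1 then ubar (i + 1) else K.mulVec (xbar N)
    (∀ i < N, ybar (i + 1) = A.mulVec (ybar i) + B.mulVec (vbar i)) ∧
      (∀ i < N, F.mulVec (ybar i) + G.mulVec (vbar i) ≤ f - t' i) ∧
      ybar N ∈ Xf := by
  intro ybar vbar
  have hexp : ∀ x : Fin n → ℝ, (A + B * K).mulVec x
      = A.mulVec x + B.mulVec (K.mulVec x) := by
    intro x
    rw [Matrix.add_mulVec, Matrix.mulVec_mulVec]
  have hFexp : ∀ x : Fin n → ℝ, (F + G * K).mulVec x
      = F.mulVec x + G.mulVec (K.mulVec x) := by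
    intro x
    rw [Matrix.add_mulVec, Matrix.mulVec_mulVec]
  refine ⟨?_, ?_, ?_⟩
  · intro i hi
    by_cases h : i < N - 1
    · have h1 : i + 1 < N := by omega
      simp only [ybar, vbar, if_pos h, if_pos hi, if_pos h1]
      exact hdyn (i + 1) h1
    · have hiN : i = N - 1 := by omega
      have hNN : ¬ (i + 1 < N) := by omega
      have hiN' : i + 1 = N := by omega
      simp only [ybar, vbar, if_pos hi, if_neg h, if_neg hNN, hiN', lt_irrefl, if_false]
      exact hexp (xbar N)
  · intro i hi
    by_cases h : i < N - 1
    · have h1 : i + 1 < N := by omega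
      simp only [ybar, vbar, if_pos hi, if_pos h]
      calc F.mulVec (xbar (i + 1)) + G.mulVec (ubar (i + 1)) ≤ f - t (i + 1) :=
            hcon (i + 1) h1
        _ ≤ f - t' i := by
            intro j
            simp only [Pi.sub_apply]
            have := hmono i j
            linarith
    · have hiN' : i + 1 = N := by omega
      simp only [ybar, vbar, if_pos hi, if_neg h, hiN']
      rw [← hFexp]
      exact hterm (xbar N) hXf i
  · have : ¬ (N < N) := lt_irrefl N
    simp only [ybar, if_neg this]
    exact hinv (xbar N) hXf
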